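/- For n = 4 or n ≥ 6, the complete double vertex graph M_2(C_n) of the cycle C_n is not Hamiltonian; in particular, Hamiltonicity of G does not imply Hamiltonicity of M_2(G). -/

import Mathlib

/-- The complete double vertex graph `M₂(G)`: vertices are the 2-multisubsets
of `V(G)` (modelled as `Sym2 V`), two of them adjacent when their symmetric
difference (as multisets) is a pair of adjacent vertices of `G`. -/
def M2 {V : Type*} (G : SimpleGraph V) : SimpleGraph (Sym2 V) where
  Adj s t := ∃ x y z, G.Adj y z ∧ s = s(x, y) ∧ t = s(x, z)
  symm := by
    constructor
    rintro s t ⟨x, y, z, h, rfl, rfl⟩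
    exact ⟨x, z, y, h.symm, rfl, rfl⟩
  loopless := by
    constructor
    rintro s ⟨x, y, z, h, rfl, heq⟩
    rw [Sym2.eq_iff] at heq
    rcases heq with ⟨-, rfl⟩ | ⟨rfl, rfl⟩
    · exact h.ne rfl
    · exact h.ne rfl

/-- The join `G + H` of two disjoint graphs. -/
def joinGraph {α β : Type*} (G : SimpleGraph α) (H : SimpleGraph β) :
    SimpleGraph (α ⊕ β) where
  Adj x y :=
    match x, y with
    | .inl a, .inl b => G.Adj a b
    | .inr a, .inr b => H.Adj a b
    | .inl _, .inr _ => True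
    | .inr _, .inl _ => True
  symm := by constructor; rintro (a | a) (b | b) h <;> simp_all [SimpleGraph.adj_comm]
  loopless := by constructor; rintro (a | a) h <;> simp_all

/-- The generalized fan graph `F_{m,n} = E_m + P_n`. -/
def fanGraph (m n : ℕ) : SimpleGraph (Fin m ⊕ Fin n) :=
  joinGraph ⊥ (SimpleGraph.pathGraph n)

/-! In `M₂(G)` the diagonal vertex `{a, a}` is adjacent exactly to the pairs `{a, b}` with
`b ~ a`. When `G` is 2-regular it therefore has degree 2, so a Hamiltonian cycle uses both of
its edges. An edge vertex `{a, b}` (`a ~ b`) is then joined on the cycle to `{a, a}` and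
`{b, b}`, which are all its cycle-neighbours. Hence the cycle cannot leave the set of diagonal
and edge vertices; as it visits every vertex, any two distinct vertices of `G` are adjacent.
In `C_n` with `n ≥ 4` the vertices `0` and `2` are not. -/

open SimpleGraph

namespace SimpleGraph.Walk

variable {V : Type*} {G : SimpleGraph V}

theorem mem_of_mem_support_of_toSubgraph_adj_closed {u v : V} (p : G.Walk u v) {S : Set V}
    (hu : u ∈ S) (hS : ∀ x y, p.toSubgraph.Adj x y → x ∈ S → y ∈ S) {w : V}
    (hw : w ∈ p.support) : w ∈ S := by
  have getVert_mem : ∀ i, p.getVert i ∈ S := by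
    intro i
    induction i with
    | zero => rwa [p.getVert_zero]
    | succ i ih =>
      rcases lt_or_ge i p.length with hi | hi
      · exact hS _ _ (p.toSubgraph_adj_getVert hi) ih
      · rwa [p.getVert_of_length_le (by omega), ← p.getVert_of_length_le hi]
  obtain ⟨i, rfl, -⟩ := p.mem_support_iff_exists_getVert.1 hw
  exact getVert_mem i

namespace IsCycle

variable {u v : V} {p : G.Walk u u}

theorem neighborSet_toSubgraph_eq_of_ncard_eq_two (hp : p.IsCycle) (hv : v ∈ p.support)
    (h : (G.neighborSet v).ncard = 2) : p.toSubgraph.neighborSet v = G.neighborSet v :=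
  Set.eq_of_subset_of_ncard_le (p.toSubgraph.neighborSet_subset v)
    (by rw [h, hp.ncard_neighborSet_toSubgraph_eq_two hv])
    (Set.finite_of_ncard_pos (by omega))

theorem neighborSet_toSubgraph_eq_pair (hp : p.IsCycle) (hv : v ∈ p.support) {x y : V}
    (hx : p.toSubgraph.Adj v x) (hy : p.toSubgraph.Adj v y) (hxy : x ≠ y) :
    p.toSubgraph.neighborSet v = {x, y} :=
  (Set.eq_of_subset_of_ncard_le (s := {x, y}) (t := p.toSubgraph.neighborSet v)
    (Set.insert_subset hx (Set.singleton_subset_iff.2 hy))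
    (by rw [hp.ncard_neighborSet_toSubgraph_eq_two hv, Set.ncard_pair hxy])
    (finite_neighborSet_toSubgraph p)).symm

end IsCycle

end SimpleGraph.Walk

section M2

variable {V : Type*} {G : SimpleGraph V}

theorem M2_adj_diag_iff {a : V} {t : Sym2 V} :
    (M2 G).Adj s(a, a) t ↔ ∃ b, G.Adj a b ∧ t = s(a, b) := by
  constructor
  · rintro ⟨x, y, z, hyz, hs, rfl⟩
    obtain ⟨rfl, rfl⟩ : x = a ∧ y = a := by rw [Sym2.eq_iff] at hs; tauto
    exact ⟨z, hyz, rfl⟩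
  · rintro ⟨b, hab, rfl⟩
    exact ⟨a, a, b, hab, rfl, rfl⟩

theorem M2_adj_diag_edge {a b : V} (h : G.Adj a b) : (M2 G).Adj s(a, a) s(a, b) :=
  M2_adj_diag_iff.2 ⟨b, h, rfl⟩

theorem M2_adj_edge_diag {a b : V} (h : G.Adj a b) : (M2 G).Adj s(a, b) s(b, b) :=
  ⟨b, a, b, h, Sym2.eq_swap, rfl⟩

theorem M2_neighborSet_diag (a : V) :
    (M2 G).neighborSet s(a, a) = (fun b ↦ s(a, b)) '' G.neighborSet a := by
  ext t
  simp only [mem_neighborSet, M2_adj_diag_iff, Set.mem_image]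
  exact exists_congr fun b ↦ by rw [eq_comm]

theorem M2_ncard_neighborSet_diag (a : V) :
    ((M2 G).neighborSet s(a, a)).ncard = (G.neighborSet a).ncard := by
  rw [M2_neighborSet_diag]
  exact Set.ncard_image_of_injective _ fun b c ↦ Sym2.congr_right.1

variable [DecidableEq V] {u : Sym2 V} {p : (M2 G).Walk u u}

theorem toSubgraph_adj_diag_iff_M2_adj (hG : ∀ v, (G.neighborSet v).ncard = 2)
    (hp : p.IsHamiltonianCycle) {a : V} {t : Sym2 V} :
    p.toSubgraph.Adj s(a, a) t ↔ (M2 G).Adj s(a, a) t :=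
  Set.ext_iff.1 (hp.isCycle.neighborSet_toSubgraph_eq_of_ncard_eq_two (hp.mem_support _)
    (by rw [M2_ncard_neighborSet_diag, hG])) t

theorem mem_diagSet_union_edgeSet_of_toSubgraph_adj (hG : ∀ v, (G.neighborSet v).ncard = 2)
    (hp : p.IsHamiltonianCycle) {s t : Sym2 V} (hst : p.toSubgraph.Adj s t)
    (hs : s ∈ Sym2.diagSet ∪ G.edgeSet) : t ∈ Sym2.diagSet ∪ G.edgeSet := by
  induction s using Sym2.ind with | _ x y => ?_
  rcases hs with hxy | hxy
  · obtain rfl := Sym2.mk_isDiag_iff.1 hxy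
    obtain ⟨y, hxy, rfl⟩ := M2_adj_diag_iff.1 ((toSubgraph_adj_diag_iff_M2_adj hG hp).1 hst)
    exact Or.inr hxy
  · have hx : p.toSubgraph.Adj s(x, y) s(x, x) :=
      ((toSubgraph_adj_diag_iff_M2_adj hG hp).2 (M2_adj_diag_edge hxy)).symm
    have hy : p.toSubgraph.Adj s(x, y) s(y, y) :=
      ((toSubgraph_adj_diag_iff_M2_adj hG hp).2 (M2_adj_edge_diag hxy).symm).symm
    have hne : s(x, x) ≠ s(y, y) := by simpa using G.ne_of_adj hxy
    have ht : t ∈ p.toSubgraph.neighborSet s(x, y) := hst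
    rw [hp.isCycle.neighborSet_toSubgraph_eq_pair (hp.mem_support _) hx hy hne] at ht
    rcases ht with rfl | rfl <;> exact Or.inl (Sym2.mk_isDiag_iff.2 rfl)

theorem adj_of_isHamiltonian_M2 [Fintype V]
    (hG : ∀ v, (G.neighborSet v).ncard = 2) (hM : (M2 G).IsHamiltonian) {a b : V}
    (hab : a ≠ b) : G.Adj a b := by
  have : Nontrivial (Sym2 V) := ⟨⟨s(a, a), s(a, b), by simp [hab]⟩⟩
  obtain ⟨p, hp⟩ := hM.exists_isHamiltonianCycle s(a, a)
  have hmem : s(a, b) ∈ Sym2.diagSet ∪ G.edgeSet :=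
    p.mem_of_mem_support_of_toSubgraph_adj_closed (Or.inl rfl)
      (fun _ _ hst ↦ mem_diagSet_union_edgeSet_of_toSubgraph_adj hG hp hst)
      (hp.mem_support s(a, b))
  simpa [hab] using hmem

end M2

theorem cycleGraph_ncard_neighborSet (n : ℕ) (v : Fin (n + 3)) :
    ((cycleGraph (n + 3)).neighborSet v).ncard = 2 := by
  rw [Set.ncard_eq_toFinset_card', ← neighborFinset_def, card_neighborFinset_eq_degree,
    cycleGraph_degree_three_le]

theorem cycleGraph_isHamiltonian (n : ℕ) : (cycleGraph (n + 3)).IsHamiltonian := fun _ ↦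
  ⟨0, cycleGraph.cycle n, Walk.isHamiltonianCycle_iff_isCycle_and_length_eq.2
    ⟨cycleGraph.isCycle_cycle, by simp⟩⟩

theorem cycleGraph_not_adj_zero_two (n : ℕ) : ¬ (cycleGraph (n + 4)).Adj 0 2 := by
  rw [cycleGraph_adj', Fin.sub_def, Fin.sub_def]
  simp [Nat.mod_eq_of_lt]

theorem not_isHamiltonian_M2_cycleGraph (n : ℕ) : ¬ (M2 (cycleGraph (n + 4))).IsHamiltonian :=
  fun h ↦ cycleGraph_not_adj_zero_two n <|
    adj_of_isHamiltonian_M2 (cycleGraph_ncard_neighborSet (n + 1)) h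
      (by simp [Fin.ext_iff, Nat.mod_eq_of_lt])

theorem stmt_16 :
    (∀ n : ℕ, n = 4 ∨ 6 ≤ n → ¬ (M2 (SimpleGraph.cycleGraph n)).IsHamiltonian) ∧
    ∃ (n : ℕ) (G : SimpleGraph (Fin n)),
      G.IsHamiltonian ∧ ¬ (M2 G).IsHamiltonian := by
  refine ⟨fun n hn ↦ ?_, 4, cycleGraph 4, cycleGraph_isHamiltonian 1,
    not_isHamiltonian_M2_cycleGraph 0⟩
  obtain ⟨m, rfl⟩ : ∃ m, n = m + 4 := ⟨n - 4, by omega⟩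
  exact not_isHamiltonian_M2_cycleGraph m
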